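/- arXiv:1807.11171 — 4 statements merged into one kernel-verified Lean document; each statement's English description precedes it below -/
import Mathlib

section
/- Let q > 0, φ > 1, and let W : (0,∞) → (0,∞) be twice continuously differentiable with W' > 0. Define Z(x) = 1 + q∫₀ˣ W(z)dz, Z̄(x) = ∫₀ˣ Z(z)dz, and ξ(z₁,z₂) = (z₂ − z₁ − c)/(Z(z₂) − Z(z₁)) − φ(Z̄(z₂) − Z̄(z₁))/(Z(z₂) − Z(z₁)) for fixed 0 ≤ z₁ < z₂ and c > 0. Then ∂/∂z₂ [ ((Z(z₂)−Z(z₁))²/(qW(z₂))) · ∂ξ/∂z₂(z₁,z₂) ] = ((Z(z₂)−Z(z₁))W'(z₂)/W(z₂)²) · ( −1/q + (φ/q)(Z(z₂) − qW(z₂)²/W'(z₂)) ). -/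
open intervalIntegral

theorem stmt_2 (q c φ z₁ z₂ : ℝ) (W W' Z Zb ξ' : ℝ → ℝ)
    (hq : 0 < q) (hφ : 1 < φ) (hc : 0 < c)
    (hz₁ : 0 ≤ z₁) (h12 : z₁ < z₂)
    (hWpos : ∀ x > (0:ℝ), 0 < W x)
    (hW' : ∀ x > (0:ℝ), HasDerivAt W (W' x) x)
    (hW'pos : ∀ x > (0:ℝ), 0 < W' x)
    (hW'cont : ContinuousOn W' (Set.Ioi 0))
    (hW'diff : ∀ x > (0:ℝ), DifferentiableAt ℝ W' x)
    (hZ : ∀ x, Z x = 1 + q * ∫ z in (0:ℝ)..x, W z)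
    (hZb : ∀ x, Zb x = ∫ z in (0:ℝ)..x, Z z)
    (hξ' : ∀ y > z₁,
      HasDerivAt (fun u => (u - z₁ - c) / (Z u - Z z₁) - φ * (Zb u - Zb z₁) / (Z u - Z z₁))
        (ξ' y) y) :
    HasDerivAt (fun y => (Z y - Z z₁) ^ 2 / (q * W y) * ξ' y)
      ((Z z₂ - Z z₁) * W' z₂ / (W z₂) ^ 2
        * (-(1 / q) + φ / q * (Z z₂ - q * (W z₂) ^ 2 / W' z₂))) z₂ := by
  have hz₂0 : (0:ℝ) < z₂ := lt_of_le_of_lt hz₁ h12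
  have hWc : ∀ x ∈ Set.Ioi (0:ℝ), ContinuousAt W x := fun x hx => (hW' x hx).continuousAt
  by_cases hint : ∃ b, z₂ < b ∧ IntervalIntegrable W MeasureTheory.volume 0 b
  · obtain ⟨b, hz₂b, hb⟩ := hint
    have h0b : (0:ℝ) < b := lt_trans hz₂0 hz₂b
    have hz₁b : z₁ < b := lt_trans h12 hz₂b
    have hIy : ∀ y, 0 ≤ y → y ≤ b → IntervalIntegrable W MeasureTheory.volume 0 y := fun y hy0 hyb =>
      hb.mono_set (by
        rw [Set.uIcc_of_le hy0, Set.uIcc_of_le h0b.le]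
        exact Set.Icc_subset_Icc le_rfl hyb)
    have hZd : ∀ y ∈ Set.Ioo (0:ℝ) b, HasDerivAt Z (q * W y) y := by
      intro y hy
      have hmeas : StronglyMeasurableAtFilter W (nhds y) MeasureTheory.volume :=
        ContinuousOn.stronglyMeasurableAtFilter isOpen_Ioi
          (fun x hx => (hWc x hx).continuousWithinAt) y hy.1
      have h1 : HasDerivAt (fun u => ∫ z in (0:ℝ)..u, W z) (W y) y :=
        intervalIntegral.integral_hasDerivAt_right (hIy y hy.1.le hy.2.le) hmeas (hWc y hy.1)
      have h2 : HasDerivAt (fun u => 1 + q * ∫ z in (0:ℝ)..u, W z) (q * W y) y :=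
        (h1.const_mul q).const_add 1
      exact h2.congr_of_eventuallyEq (Filter.Eventually.of_forall hZ)
    -- Z is continuous on [0, b]
    have hIcc : Set.uIcc (0:ℝ) b = Set.Icc 0 b := Set.uIcc_of_le h0b.le
    have hprim : ContinuousOn (fun x => ∫ t in (0:ℝ)..x, W t) (Set.Icc 0 b) := by
      have := intervalIntegral.continuousOn_primitive_interval
        (μ := MeasureTheory.volume) (f := W) (a := (0:ℝ)) (b := b)
        (by rw [hIcc]; exact (intervalIntegrable_iff_integrableOn_Icc_of_le h0b.le).mp hb)
      rwa [hIcc] at this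
    have hZcont : ContinuousOn Z (Set.Icc 0 b) := by
      have : ContinuousOn (fun x => 1 + q * ∫ t in (0:ℝ)..x, W t) (Set.Icc 0 b) :=
        continuousOn_const.add (continuousOn_const.mul hprim)
      exact this.congr (fun x _ => hZ x)
    have hIZ : ∀ y, 0 ≤ y → y ≤ b → IntervalIntegrable Z MeasureTheory.volume 0 y := by
      intro y hy0 hyb
      apply ContinuousOn.intervalIntegrable
      apply hZcont.mono
      rw [Set.uIcc_of_le hy0]
      exact Set.Icc_subset_Icc le_rfl hyb
    have hZbd : ∀ y ∈ Set.Ioo (0:ℝ) b, HasDerivAt Zb (Z y) y := by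
      intro y hy
      have hmeas : StronglyMeasurableAtFilter Z (nhds y) MeasureTheory.volume :=
        ContinuousAt.stronglyMeasurableAtFilter isOpen_Ioo
          (fun x hx => (hZd x hx).continuousAt) y hy
      have h1 : HasDerivAt (fun u => ∫ z in (0:ℝ)..u, Z z) (Z y) y :=
        intervalIntegral.integral_hasDerivAt_right (hIZ y hy.1.le hy.2.le) hmeas
          (hZd y hy).continuousAt
      exact h1.congr_of_eventuallyEq (Filter.Eventually.of_forall hZb)
    -- positivity of D
    have hD : ∀ y ∈ Set.Ioo z₁ b, 0 < Z y - Z z₁ := by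
      intro y hy
      have hy0 : 0 < y := lt_of_le_of_lt hz₁ hy.1
      have hIyy := hIy y hy0.le hy.2.le
      have hIz₁ := hIy z₁ hz₁ hz₁b.le
      have hsub : Z y - Z z₁ = q * ∫ z in z₁..y, W z := by
        rw [hZ, hZ, ← intervalIntegral.integral_interval_sub_left hIyy hIz₁]; ring
      have hII : IntervalIntegrable W MeasureTheory.volume z₁ y := hIyy.mono_set
        (Set.uIcc_subset_uIcc (by rw [Set.uIcc_of_le hy0.le]; exact ⟨hz₁, hy.1.le⟩)
          (by rw [Set.uIcc_of_le hy0.le]; exact ⟨hy0.le, le_rfl⟩))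
      have hpos : 0 < ∫ z in z₁..y, W z :=
        intervalIntegral.intervalIntegral_pos_of_pos_on hII
          (fun x hx => hWpos x (lt_of_le_of_lt hz₁ hx.1)) hy.1
      rw [hsub]; positivity
    -- formula for ξ'
    have hξeq : ∀ y ∈ Set.Ioo z₁ b,
        ξ' y = ((Z y - Z z₁) - (y - z₁ - c) * (q * W y)) / (Z y - Z z₁) ^ 2
          - ((φ * Z y) * (Z y - Z z₁) - (φ * (Zb y - Zb z₁)) * (q * W y)) / (Z y - Z z₁) ^ 2 := by
      intro y hy
      have hy0 : 0 < y := lt_of_le_of_lt hz₁ hy.1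
      have hDy : Z y - Z z₁ ≠ 0 := (hD y hy).ne'
      have hZdy := hZd y ⟨hy0, hy.2⟩
      have hZbdy := hZbd y ⟨hy0, hy.2⟩
      have h1 : HasDerivAt (fun u : ℝ => u - z₁ - c) 1 y := by
        simpa using ((hasDerivAt_id y).sub_const z₁).sub_const c
      have hDd : HasDerivAt (fun u => Z u - Z z₁) (q * W y) y := hZdy.sub_const _
      have hA := h1.div hDd hDy
      have hB := ((hZbdy.sub_const (Zb z₁)).const_mul φ).div hDd hDy
      have := (hξ' y hy.1).unique (hA.sub hB)
      rw [this]; ring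
    -- F = g on Ioo z₁ b
    set g : ℝ → ℝ := fun y =>
      (1 - φ * Z y) * (Z y - Z z₁) / (q * W y) - (y - z₁ - c) + φ * (Zb y - Zb z₁) with hg_def
    have hFg : ∀ y ∈ Set.Ioo z₁ b, (Z y - Z z₁) ^ 2 / (q * W y) * ξ' y = g y := by
      intro y hy
      have hy0 : 0 < y := lt_of_le_of_lt hz₁ hy.1
      have hDy : Z y - Z z₁ ≠ 0 := (hD y hy).ne'
      have hWy : W y ≠ 0 := (hWpos y hy0).ne'
      rw [hξeq y hy, hg_def]
      field_simp
      ring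
    -- derivative of g at z₂
    have hz₂mem : z₂ ∈ Set.Ioo z₁ b := ⟨h12, hz₂b⟩
    have hZd2 := hZd z₂ ⟨hz₂0, hz₂b⟩
    have hZbd2 := hZbd z₂ ⟨hz₂0, hz₂b⟩
    have hW2 := hW' z₂ hz₂0
    have hWne : W z₂ ≠ 0 := (hWpos z₂ hz₂0).ne'
    have hW'ne : W' z₂ ≠ 0 := (hW'pos z₂ hz₂0).ne'
    have hqW : q * W z₂ ≠ 0 := mul_ne_zero hq.ne' hWne
    have hnum : HasDerivAt (fun y => (1 - φ * Z y) * (Z y - Z z₁))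
        (-(φ * (q * W z₂)) * (Z z₂ - Z z₁) + (1 - φ * Z z₂) * (q * W z₂)) z₂ :=
      ((hZd2.const_mul φ).const_sub 1).mul (hZd2.sub_const _)
    have hden : HasDerivAt (fun y => q * W y) (q * W' z₂) z₂ := hW2.const_mul q
    have hfrac := hnum.div hden hqW
    have hlin : HasDerivAt (fun u : ℝ => u - z₁ - c) 1 z₂ := by
      simpa using ((hasDerivAt_id z₂).sub_const z₁).sub_const c
    have hZbterm : HasDerivAt (fun y => φ * (Zb y - Zb z₁)) (φ * Z z₂) z₂ :=
      (hZbd2.sub_const (Zb z₁)).const_mul φ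
    have hgd := (hfrac.sub hlin).add hZbterm
    have heq : ((-(φ * (q * W z₂)) * (Z z₂ - Z z₁) + (1 - φ * Z z₂) * (q * W z₂)) * (q * W z₂)
          - (1 - φ * Z z₂) * (Z z₂ - Z z₁) * (q * W' z₂)) / (q * W z₂) ^ 2 - 1 + φ * Z z₂
        = (Z z₂ - Z z₁) * W' z₂ / W z₂ ^ 2
          * (-(1 / q) + φ / q * (Z z₂ - q * W z₂ ^ 2 / W' z₂)) := by
      field_simp
      ring
    rw [← heq]
    apply hgd.congr_of_eventuallyEq
    filter_upwards [isOpen_Ioo.mem_nhds hz₂mem] with y hy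
    exact hFg y hy
  · push_neg at hint
    have hZ1 : ∀ x, 0 ≤ x → Z x = 1 := by
      intro x hx
      rcases eq_or_lt_of_le hx with h | h
      · rw [hZ, ← h]; simp
      · have hnI : ¬ IntervalIntegrable W MeasureTheory.volume 0 x := by
          intro hIx
          refine hint (max x (z₂ + 1)) (lt_of_lt_of_le (by linarith) (le_max_right _ _)) ?_
          refine hIx.trans (ContinuousOn.intervalIntegrable ?_)
          intro t ht
          have : 0 < t := by
            rcases Set.mem_uIcc.mp ht with h' | h'
            · exact lt_of_lt_of_le h h'.1
            · exact lt_of_lt_of_le (by positivity) h'.1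
          exact ((hWc t this).continuousWithinAt)
        rw [hZ, intervalIntegral.integral_undef hnI]; ring
    have hRHS : (Z z₂ - Z z₁) * W' z₂ / W z₂ ^ 2
        * (-(1 / q) + φ / q * (Z z₂ - q * W z₂ ^ 2 / W' z₂)) =
        (0:ℝ) := by
      rw [hZ1 z₂ hz₂0.le, hZ1 z₁ hz₁]; ring
    rw [hRHS]
    apply (hasDerivAt_const z₂ (0:ℝ)).congr_of_eventuallyEq
    filter_upwards [isOpen_Ioi.mem_nhds (show z₂ ∈ Set.Ioi z₁ from h12)] with y hy
    rw [hZ1 y (le_of_lt (lt_of_le_of_lt hz₁ hy)), hZ1 z₁ hz₁]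
    simp
end

section
/- Let q > 0, φ > 1, and let W : [0,∞) → [0,∞) be continuous with W(0) ≥ 0 and W(x) > 0 for x > 0, and suppose W(x)·∫₀^{z₂}W(y)dy ≥ W(z₂)·∫₀ˣW(y)dy for all 0 ≤ x ≤ z₂ (with z₂ > 0 fixed). Define Z(x) = 1 + q∫₀ˣ W(z)dz. Then for all x ∈ (0, z₂): φ·Z(x) + W(x)·(1 − φZ(z₂))/W(z₂) < φ, and at x = 0 and x = z₂ the left-hand side is ≤ φ (with equality value 1 < φ at x = z₂). -/
/-!
With `W̄ x = ∫₀ˣ W` and `Z = 1 + q W̄`, the gap to `φ` is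
`φ - (φ Z x + W x (1 - φ Z z₂) / W z₂) = (q φ (W x W̄ z₂ - W z₂ W̄ x) + W x (φ - 1)) / W z₂`.
The first summand of the numerator is nonnegative by the hypothesis on `W̄`, and the second is
nonnegative, and positive wherever `W x > 0`, since `φ > 1`.
-/

section ScaleCombination

variable {q φ wx wz bx bz : ℝ}

theorem phi_sub_scale_combination_eq (hwz : wz ≠ 0) :
    φ - (φ * (1 + q * bx) + wx * (1 - φ * (1 + q * bz)) / wz) =
      (q * φ * (wx * bz - wz * bx) + wx * (φ - 1)) / wz := by
  field_simp
  ring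

theorem scale_combination_le (hq : 0 ≤ q) (hφ : 1 ≤ φ) (hwz : 0 < wz) (hwx : 0 ≤ wx)
    (hb : wz * bx ≤ wx * bz) :
    φ * (1 + q * bx) + wx * (1 - φ * (1 + q * bz)) / wz ≤ φ := by
  have hnum : 0 ≤ q * φ * (wx * bz - wz * bx) + wx * (φ - 1) :=
    add_nonneg (mul_nonneg (mul_nonneg hq (zero_le_one.trans hφ)) (sub_nonneg.2 hb))
      (mul_nonneg hwx (sub_nonneg.2 hφ))
  rw [← sub_nonneg, phi_sub_scale_combination_eq hwz.ne']
  exact div_nonneg hnum hwz.le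

theorem scale_combination_lt (hq : 0 ≤ q) (hφ : 1 < φ) (hwz : 0 < wz) (hwx : 0 < wx)
    (hb : wz * bx ≤ wx * bz) :
    φ * (1 + q * bx) + wx * (1 - φ * (1 + q * bz)) / wz < φ := by
  have hnum : 0 < q * φ * (wx * bz - wz * bx) + wx * (φ - 1) :=
    add_pos_of_nonneg_of_pos
      (mul_nonneg (mul_nonneg hq (zero_le_one.trans hφ.le)) (sub_nonneg.2 hb))
      (mul_pos hwx (sub_pos.2 hφ))
  rw [← sub_pos, phi_sub_scale_combination_eq hwz.ne']
  exact div_pos hnum hwz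

end ScaleCombination

open intervalIntegral

theorem stmt_4_general (q φ z₂ : ℝ) (W Z : ℝ → ℝ)
    (hq : 0 < q) (hφ : 1 < φ) (hz₂ : 0 < z₂)
    (hW0 : 0 ≤ W 0) (hWpos : ∀ x > (0:ℝ), 0 < W x)
    (hWbar : ∀ x, 0 ≤ x → x ≤ z₂ →
      W x * (∫ y in (0:ℝ)..z₂, W y) ≥ W z₂ * (∫ y in (0:ℝ)..x, W y))
    (hZ : ∀ x, Z x = 1 + q * ∫ z in (0:ℝ)..x, W z) :
    (∀ x, 0 < x → x < z₂ → φ * Z x + W x * (1 - φ * Z z₂) / W z₂ < φ) ∧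
    φ * Z 0 + W 0 * (1 - φ * Z z₂) / W z₂ ≤ φ ∧
    φ * Z z₂ + W z₂ * (1 - φ * Z z₂) / W z₂ = 1 ∧ (1:ℝ) < φ := by
  have hWz₂ : 0 < W z₂ := hWpos z₂ hz₂
  refine ⟨fun x hx hxz₂ => ?_, ?_, ?_, hφ⟩
  · rw [hZ, hZ]
    exact scale_combination_lt hq.le hφ hWz₂ (hWpos x hx) (hWbar x hx.le hxz₂.le)
  · rw [hZ, hZ]
    exact scale_combination_le hq.le hφ.le hWz₂ hW0 (hWbar 0 le_rfl hz₂.le)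
  · rw [mul_div_cancel_left₀ _ hWz₂.ne']
    ring

theorem stmt_4 (q φ z₂ : ℝ) (W Z : ℝ → ℝ)
    (hq : 0 < q) (hφ : 1 < φ) (hz₂ : 0 < z₂)
    (hWcont : Continuous W)
    (hW0 : 0 ≤ W 0) (hWpos : ∀ x > (0:ℝ), 0 < W x)
    (hWbar : ∀ x, 0 ≤ x → x ≤ z₂ →
      W x * (∫ y in (0:ℝ)..z₂, W y) ≥ W z₂ * (∫ y in (0:ℝ)..x, W y))
    (hZ : ∀ x, Z x = 1 + q * ∫ z in (0:ℝ)..x, W z) :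
    (∀ x, 0 < x → x < z₂ → φ * Z x + W x * (1 - φ * Z z₂) / W z₂ < φ) ∧
    φ * Z 0 + W 0 * (1 - φ * Z z₂) / W z₂ ≤ φ ∧
    φ * Z z₂ + W z₂ * (1 - φ * Z z₂) / W z₂ = 1 ∧ (1:ℝ) < φ :=
  stmt_4_general q φ z₂ W Z hq hφ hz₂ hW0 hWpos hWbar hZ
end

section
/- Let q > 0, φ > 1, c > 0, and let W : (0,∞) → (0,∞) be continuous; define Z(x) = 1 + q∫₀ˣW and Z̄(x) = ∫₀ˣZ. Suppose (z₁, z₂) with 0 ≤ z₁, z₁ + c ≤ z₂ satisfies: for all 0 ≤ y with y + c ≤ x, (x − y − c)/(Z(x) − Z(y)) − φ(Z̄(x) − Z̄(y))/(Z(x) − Z(y)) ≤ (z₂ − z₁ − c)/(Z(z₂) − Z(z₁)) − φ(Z̄(z₂) − Z̄(z₁))/(Z(z₂) − Z(z₁)). Define V(x) = φZ̄(x) + Z(x)·κ for x ∈ [0, z₂] where κ := (z₂ − z₁ − c)/(Z(z₂) − Z(z₁)) − φ(Z̄(z₂) − Z̄(z₁))/(Z(z₂) − Z(z₁)). Then for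 all 0 ≤ y < y + c ≤ x ≤ z₂, V(x) − V(y) ≥ x − y − c. -/
open intervalIntegral

theorem stmt_5 (q φ c z₁ z₂ : ℝ) (W Z Zb V : ℝ → ℝ)
    (hq : 0 < q) (hφ : 1 < φ) (hc : 0 < c)
    (hz₁ : 0 ≤ z₁) (h12 : z₁ + c ≤ z₂)
    (hWcont : ContinuousOn W (Set.Ioi 0))
    (hWpos : ∀ x > (0:ℝ), 0 < W x)
    (hZ : ∀ x, Z x = 1 + q * ∫ z in (0:ℝ)..x, W z)
    (hZb : ∀ x, Zb x = ∫ z in (0:ℝ)..x, Z z)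
    (hmax : ∀ y x : ℝ, 0 ≤ y → y + c ≤ x →
      (x - y - c) / (Z x - Z y) - φ * (Zb x - Zb y) / (Z x - Z y) ≤
      (z₂ - z₁ - c) / (Z z₂ - Z z₁) - φ * (Zb z₂ - Zb z₁) / (Z z₂ - Z z₁))
    (hV : ∀ x, 0 ≤ x → x ≤ z₂ → V x = φ * Zb x + Z x *
      ((z₂ - z₁ - c) / (Z z₂ - Z z₁) - φ * (Zb z₂ - Zb z₁) / (Z z₂ - Z z₁))) :
    ∀ y x : ℝ, 0 ≤ y → y + c ≤ x → x ≤ z₂ → V x - V y ≥ x - y - c := by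
  intro y x hy hyx hxz
  have hx : 0 ≤ x := by linarith
  have hy2 : y ≤ z₂ := by linarith
  set κ := (z₂ - z₁ - c) / (Z z₂ - Z z₁) - φ * (Zb z₂ - Zb z₁) / (Z z₂ - Z z₁) with hκ
  rw [hV x hx hxz, hV y hy hy2]
  by_cases hInt : ∀ t > (0:ℝ), IntervalIntegrable W MeasureTheory.volume 0 t
  · -- Z is strictly increasing on [0, ∞)
    have hxpos : 0 < x := by linarith
    have hIyx : IntervalIntegrable W MeasureTheory.volume y x := by
      apply (hInt x hxpos).mono_set
      rw [Set.uIcc_of_le (by linarith : y ≤ x), Set.uIcc_of_le hx]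
      exact Set.Icc_subset_Icc hy le_rfl
    have hI0y : IntervalIntegrable W MeasureTheory.volume 0 y := by
      rcases eq_or_lt_of_le hy with h | h
      · subst h; exact IntervalIntegrable.refl
      · exact hInt y h
    have hsplit : Z x - Z y = q * ∫ z in y..x, W z := by
      rw [hZ x, hZ y]
      rw [← intervalIntegral.integral_add_adjacent_intervals hI0y hIyx]
      ring
    have hd : 0 < Z x - Z y := by
      rw [hsplit]
      apply mul_pos hq
      apply intervalIntegral.intervalIntegral_pos_of_pos_on hIyx
      · intro t ht
        exact hWpos t (lt_of_le_of_lt hy ht.1)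
      · linarith
    have h := hmax y x hy hyx
    rw [← sub_div] at h
    have h2 : x - y - c - φ * (Zb x - Zb y) ≤ κ * (Z x - Z y) := (div_le_iff₀ hd).mp h
    nlinarith [h2]
  · -- degenerate case: W not integrable near 0, so Z ≡ 1 on [0,∞)
    push_neg at hInt
    obtain ⟨t₀, ht₀, hnI⟩ := hInt
    have hnone : ∀ t > (0:ℝ), ¬ IntervalIntegrable W MeasureTheory.volume 0 t := by
      intro t ht hI
      rcases le_or_gt t₀ t with h | h
      · exact hnI (hI.mono_set (by rw [Set.uIcc_of_le ht₀.le, Set.uIcc_of_le (ht₀.le.trans h)]; exact Set.Icc_subset_Icc le_rfl h))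
      · apply hnI
        refine hI.trans ?_
        apply ContinuousOn.intervalIntegrable
        apply hWcont.mono
        rw [Set.uIcc_of_le h.le]
        intro s hs
        exact lt_of_lt_of_le ht hs.1
    have hZ1 : ∀ t, 0 ≤ t → Z t = 1 := by
      intro t ht
      rcases eq_or_lt_of_le ht with h | h
      · rw [hZ t, ← h]; simp
      · rw [hZ t, intervalIntegral.integral_undef (hnone t h)]; ring
    have hZb1 : ∀ t, 0 ≤ t → Zb t = t := by
      intro t ht
      rw [hZb t]
      rw [intervalIntegral.integral_congr (g := fun _ => (1:ℝ))
        (by intro s hs; rw [Set.uIcc_of_le ht] at hs; exact hZ1 s hs.1)]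
      simp
    rw [hZ1 x hx, hZ1 y hy, hZb1 x hx, hZb1 y hy]
    nlinarith [mul_pos (by linarith : (0:ℝ) < φ - 1) (by linarith : (0:ℝ) < x - y)]
end

section
/- Let μ ∈ ℝ, σ > 0, q > 0, c > 0, φ > 0, and α > 0 > β, δ = (α−β)/2 as in the Brownian setup. Define ζ(z₁,z₂) = α(e^{−βz₂} − e^{−βz₁}) − β(e^{−αz₂} − e^{−αz₁}) and ξ(z₁,z₂) = 2δ(z₂−z₁−c)/ζ(z₁,z₂) − φμ/q − φ(e^{−βz₂} − e^{−βz₁} − e^{−αz₂} + e^{−αz₁})/ζ(z₁,z₂), for 0 ≤ z₁ < z₂. If at a point (z₁,z₂) with ζ(z₁,z₂) ≠ 0 both ∂ξ/∂z₁ = 0 and ∂ξ/∂z₂ = 0, then e^{−αz₂} − e^{−αz₁} − e^{−βz₂} + e^{−βz₁} + φ(e^{−βz₂−αz₁} − e^{−αz₂−βz₁}) = 0. -/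
theorem stmt_10 (μ σ q c φ α β δ z₁ z₂ : ℝ)
    (hσ : 0 < σ) (hq : 0 < q) (hc : 0 < c) (hφ : 0 < φ)
    (hα : 0 < α) (hβ : β < 0) (hδ : δ = (α - β) / 2)
    (hαβ : α * β = -(2 * q) / σ ^ 2)
    (hz₁ : 0 ≤ z₁) (h12 : z₁ < z₂)
    (ζ ξ : ℝ → ℝ → ℝ)
    (hζ : ∀ y₁ y₂, ζ y₁ y₂ =
      α * (Real.exp (-β * y₂) - Real.exp (-β * y₁)) -
      β * (Real.exp (-α * y₂) - Real.exp (-α * y₁)))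
    (hξ : ∀ y₁ y₂, ξ y₁ y₂ =
      2 * δ * (y₂ - y₁ - c) / ζ y₁ y₂ - φ * μ / q -
      φ * (Real.exp (-β * y₂) - Real.exp (-β * y₁) -
        Real.exp (-α * y₂) + Real.exp (-α * y₁)) / ζ y₁ y₂)
    (hζne : ζ z₁ z₂ ≠ 0)
    (hd1 : HasDerivAt (fun y => ξ y z₂) 0 z₁)
    (hd2 : HasDerivAt (fun y => ξ z₁ y) 0 z₂) :
    Real.exp (-α * z₂) - Real.exp (-α * z₁) - Real.exp (-β * z₂) + Real.exp (-β * z₁)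
      + φ * (Real.exp (-β * z₂ - α * z₁) - Real.exp (-α * z₂ - β * z₁)) = 0 := by
  set a1 := Real.exp (-α * z₁) with ha1
  set a2 := Real.exp (-α * z₂) with ha2
  set b1 := Real.exp (-β * z₁) with hb1
  set b2 := Real.exp (-β * z₂) with hb2
  -- basic exponential derivatives
  have hea1 : HasDerivAt (fun y => Real.exp (-α * y)) (a1 * (-α)) z₁ :=
    ((hasDerivAt_id z₁).const_mul (-α)).exp.congr_deriv (by simp only [id_eq]; rw [ha1]; ring_nf)
  have heb1 : HasDerivAt (fun y => Real.exp (-β * y)) (b1 * (-β)) z₁ :=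
    ((hasDerivAt_id z₁).const_mul (-β)).exp.congr_deriv (by simp only [id_eq]; rw [hb1]; ring_nf)
  have hea2 : HasDerivAt (fun y => Real.exp (-α * y)) (a2 * (-α)) z₂ :=
    ((hasDerivAt_id z₂).const_mul (-α)).exp.congr_deriv (by simp only [id_eq]; rw [ha2]; ring_nf)
  have heb2 : HasDerivAt (fun y => Real.exp (-β * y)) (b2 * (-β)) z₂ :=
    ((hasDerivAt_id z₂).const_mul (-β)).exp.congr_deriv (by simp only [id_eq]; rw [hb2]; ring_nf)
  -- ζ as functions of each variable
  have hg1 : HasDerivAt (fun y => ζ y z₂) (α * β * (b1 - a1)) z₁ := by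
    have he : (fun y => ζ y z₂) = fun y =>
        α * (b2 - Real.exp (-β * y)) - β * (a2 - Real.exp (-α * y)) :=
      funext fun y => hζ y z₂
    rw [he]
    have := (((hasDerivAt_const z₁ b2).sub heb1).const_mul α).sub
      (((hasDerivAt_const z₁ a2).sub hea1).const_mul β)
    exact this.congr_deriv (by ring)
  have hg2 : HasDerivAt (fun y => ζ z₁ y) (-(α * β) * (b2 - a2)) z₂ := by
    have he : (fun y => ζ z₁ y) = fun y =>
        α * (Real.exp (-β * y) - b1) - β * (Real.exp (-α * y) - a1) :=
      funext fun y => hζ z₁ y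
    rw [he]
    have := (((heb2).sub (hasDerivAt_const z₂ b1)).const_mul α).sub
      (((hea2).sub (hasDerivAt_const z₂ a1)).const_mul β)
    exact this.congr_deriv (by ring)
  have hgv : ζ z₁ z₂ = α * (b2 - b1) - β * (a2 - a1) := hζ z₁ z₂
  set G := ζ z₁ z₂ with hG
  -- derivative of ξ in first variable
  have hf1 : HasDerivAt (fun y => ξ y z₂)
      (((-(2*δ)) * G - (2*δ*(z₂ - z₁ - c)) * (α*β*(b1-a1))) / G^2 -
       ((φ * (b1*(-β) * (-1) + a1*(-α))) * G -
        (φ * (b2 - b1 - a2 + a1)) * (α*β*(b1-a1))) / G^2) z₁ := by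
    have he : (fun y => ξ y z₂) = fun y =>
        2 * δ * (z₂ - y - c) / ζ y z₂ - φ * μ / q -
        φ * (b2 - Real.exp (-β * y) - a2 + Real.exp (-α * y)) / ζ y z₂ :=
      funext fun y => hξ y z₂
    rw [he]
    have hN1 : HasDerivAt (fun y => 2 * δ * (z₂ - y - c)) (-(2*δ)) z₁ := by
      have := (((hasDerivAt_const z₁ z₂).sub (hasDerivAt_id z₁)).sub
        (hasDerivAt_const z₁ c)).const_mul (2*δ)
      exact this.congr_deriv (by ring)
    have hN2 : HasDerivAt (fun y =>
        φ * (b2 - Real.exp (-β * y) - a2 + Real.exp (-α * y)))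
        (φ * (b1*(-β) * (-1) + a1*(-α))) z₁ := by
      have := ((((hasDerivAt_const z₁ b2).sub heb1).sub
        (hasDerivAt_const z₁ a2)).add hea1).const_mul φ
      exact this.congr_deriv (by ring)
    exact ((hN1.div hg1 hζne).sub_const (φ*μ/q)).sub (hN2.div hg1 hζne)
  have hf2 : HasDerivAt (fun y => ξ z₁ y)
      ((2*δ * G - (2*δ*(z₂ - z₁ - c)) * (-(α*β)*(b2-a2))) / G^2 -
       ((φ * (b2*(-β) + a2*(-α)*(-1))) * G -
        (φ * (b2 - b1 - a2 + a1)) * (-(α*β)*(b2-a2))) / G^2) z₂ := by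
    have he : (fun y => ξ z₁ y) = fun y =>
        2 * δ * (y - z₁ - c) / ζ z₁ y - φ * μ / q -
        φ * (Real.exp (-β * y) - b1 - Real.exp (-α * y) + a1) / ζ z₁ y :=
      funext fun y => hξ z₁ y
    rw [he]
    have hN1 : HasDerivAt (fun y => 2 * δ * (y - z₁ - c)) (2*δ) z₂ := by
      have := (((hasDerivAt_id z₂).sub (hasDerivAt_const z₂ z₁)).sub
        (hasDerivAt_const z₂ c)).const_mul (2*δ)
      exact this.congr_deriv (by ring)
    have hN2 : HasDerivAt (fun y =>
        φ * (Real.exp (-β * y) - b1 - Real.exp (-α * y) + a1))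
        (φ * (b2*(-β) + a2*(-α)*(-1))) z₂ := by
      have := ((((heb2).sub (hasDerivAt_const z₂ b1)).sub
        hea2).add (hasDerivAt_const z₂ a1)).const_mul φ
      exact this.congr_deriv (by ring)
    exact ((hN1.div hg2 hζne).sub_const (φ*μ/q)).sub (hN2.div hg2 hζne)
  have e1 := hd1.unique hf1
  have e2 := hd2.unique hf2
  have hGne : G ≠ 0 := hζne
  subst hδ
  have hαβne : α * β ≠ 0 := ne_of_lt (mul_neg_of_pos_of_neg hα hβ)
  have hG2 : G ^ 2 ≠ 0 := pow_ne_zero 2 hGne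
  rw [div_sub_div_same] at e1 e2
  have E1 := (div_eq_zero_iff.mp e1.symm).resolve_right hG2
  have E2 := (div_eq_zero_iff.mp e2.symm).resolve_right hG2
  have hx1 : Real.exp (-β * z₂ - α * z₁) = b2 * a1 := by
    rw [hb2, ha1, ← Real.exp_add]; ring_nf
  have hx2 : Real.exp (-α * z₂ - β * z₁) = a2 * b1 := by
    rw [ha2, hb1, ← Real.exp_add]; ring_nf
  rw [hx1, hx2]
  have hαβne' : (α - β) ≠ 0 := sub_ne_zero.mpr (by linarith)
  have key : (-(α*β) * (α-β)) * G *
      (a2 - a1 - b2 + b1 + φ * (b2 * a1 - a2 * b1)) = 0 := by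
    linear_combination E1 * (-(α*β)*(b2-a2)) - E2 * (α*β*(b1-a1))
  have hs : (-(α*β) * (α-β)) * G ≠ 0 :=
    mul_ne_zero (mul_ne_zero (neg_ne_zero.mpr hαβne) hαβne') hGne
  exact (mul_eq_zero.mp key).resolve_left hs
end
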